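/- arXiv:2511.06945 — 9 statements merged into one kernel-verified Lean document; each statement's English description precedes it below -/
import Mathlib

section
/- Let P : C^op → InfSl be a lex primary doctrine and P^∃ its full existential completion. For every product projection π : A × B → A, the reindexing map P^∃_π : P^∃(A) → P^∃(A×B) has a left adjoint ∃_π given by post-composition: ∃_π(f : C → A×B, α) = (π ∘ f : C → A, α); i.e., ∃_π(x) ≤ y iff x ≤ P^∃_π(y) for all x ∈ P^∃(A×B), y ∈ P^∃(A). -/
open CategoryTheory CategoryTheory.Limits

universe w v u

structure Doctrine (C : Type u) [Category.{v} C] where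
  P : C → Type w
  [instOrd : ∀ A, SemilatticeInf (P A)]
  [instTop : ∀ A, OrderTop (P A)]
  map : ∀ {A B : C}, (A ⟶ B) → P B → P A
  map_id : ∀ (A : C) (x : P A), map (𝟙 A) x = x
  map_comp : ∀ {A B D : C} (f : A ⟶ B) (g : B ⟶ D) (x : P D),
      map (f ≫ g) x = map f (map g x)
  map_mono : ∀ {A B : C} (f : A ⟶ B), Monotone (map f)
  map_top : ∀ {A B : C} (f : A ⟶ B), map f (⊤ : P B) = ⊤
  map_inf : ∀ {A B : C} (f : A ⟶ B) (x y : P B), map f (x ⊓ y) = map f x ⊓ map f y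

attribute [instance] Doctrine.instOrd Doctrine.instTop

variable {C : Type u} [Category.{v} C]

structure Pt (P : Doctrine.{w} C) where
  base : C
  pred : P.P base

structure PtHom (P : Doctrine.{w} C) (X Y : Pt P) where
  hom : X.base ⟶ Y.base
  cond : X.pred ≤ P.map hom Y.pred

theorem PtHom.ext' {P : Doctrine.{w} C} {X Y : Pt P} {f g : PtHom P X Y}
    (h : f.hom = g.hom) : f = g := by
  cases f; cases g; cases h; rfl

instance Pt.categoryStruct (P : Doctrine.{w} C) : CategoryStruct (Pt P) where
  Hom X Y := PtHom P X Y
  id X := ⟨𝟙 X.base, by rw [P.map_id]⟩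
  comp f g := ⟨f.hom ≫ g.hom, by
    rw [P.map_comp]; exact le_trans f.cond (P.map_mono f.hom g.cond)⟩

@[simp] theorem Pt.comp_hom {P : Doctrine.{w} C} {X Y Z : Pt P} (f : X ⟶ Y) (g : Y ⟶ Z) :
    (f ≫ g).hom = f.hom ≫ g.hom := rfl

@[simp] theorem Pt.id_hom {P : Doctrine.{w} C} (X : Pt P) : (𝟙 X : X ⟶ X).hom = 𝟙 X.base := rfl

instance Pt.category (P : Doctrine.{w} C) : Category (Pt P) where
  id_comp f := PtHom.ext' (by simp)
  comp_id f := PtHom.ext' (by simp)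
  assoc f g h := PtHom.ext' (by simp)

structure ExEl (P : Doctrine.{w} C) (A : C) where
  dom : C
  arr : dom ⟶ A
  pred : P.P dom

def ExLe (P : Doctrine.{w} C) {A : C} (x y : ExEl P A) : Prop :=
  ∃ h : x.dom ⟶ y.dom, x.arr = h ≫ y.arr ∧ x.pred ≤ P.map h y.pred

def ExEl.top (P : Doctrine.{w} C) (A : C) : ExEl P A := ⟨A, 𝟙 A, ⊤⟩

def ExEl.push {P : Doctrine.{w} C} {A B : C} (x : ExEl P A) (w : A ⟶ B) : ExEl P B :=
  ⟨x.dom, x.arr ≫ w, x.pred⟩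

noncomputable def ExEl.meet [HasPullbacks C] {P : Doctrine.{w} C} {A : C} (x y : ExEl P A) : ExEl P A :=
  ⟨pullback x.arr y.arr, pullback.fst x.arr y.arr ≫ x.arr,
    P.map (pullback.fst x.arr y.arr) x.pred ⊓ P.map (pullback.snd x.arr y.arr) y.pred⟩

noncomputable def Doctrine.reind [HasPullbacks C] (P : Doctrine.{w} C) {A A' : C} (u : A' ⟶ A)
    (y : ExEl P A) : ExEl P A' :=
  ⟨pullback u y.arr, pullback.fst u y.arr, P.map (pullback.snd u y.arr) y.pred⟩

theorem ExEl.exLe_push_iff_exLe_reind [HasPullbacks C] {P : Doctrine.{w} C} {A A' : C}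
    (u : A' ⟶ A) (x : ExEl P A') (y : ExEl P A) :
    ExLe P (x.push u) y ↔ ExLe P x (P.reind u y) := by
  constructor
  · rintro ⟨(h : x.dom ⟶ y.dom), (hc : x.arr ≫ u = h ≫ y.arr), (hp : x.pred ≤ P.map h y.pred)⟩
    refine ⟨pullback.lift x.arr h hc, (pullback.lift_fst _ _ _).symm, ?_⟩
    have hpred : P.map h y.pred =
        P.map (pullback.lift x.arr h hc) (P.map (pullback.snd u y.arr) y.pred) := by
      rw [← P.map_comp, pullback.lift_snd]
    exact hp.trans_eq hpred
  · rintro ⟨(k : x.dom ⟶ pullback u y.arr), (hc : x.arr = k ≫ pullback.fst u y.arr),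
      (hp : x.pred ≤ P.map k (P.map (pullback.snd u y.arr) y.pred))⟩
    refine ⟨(k ≫ pullback.snd u y.arr : x.dom ⟶ y.dom), ?_, ?_⟩
    · change x.arr ≫ u = _
      rw [hc, Category.assoc, pullback.condition]
      exact (Category.assoc _ _ _).symm
    · exact hp.trans_eq (P.map_comp _ _ _).symm

/-- in the full existential completion `P^∃`, reindexing along a product
projection `π : A ⨯ B ⟶ A` (computed by pullback, `Doctrine.reind`) has a left adjoint
given by post-composition (`ExEl.push`): `∃_π(x) ≤ y ↔ x ≤ P^∃_π(y)`. -/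
theorem fullExCompletion_exists_adjoint [HasFiniteLimits C]
    (P : Doctrine.{w} C) (A B : C) (x : ExEl P (A ⨯ B)) (y : ExEl P A) :
    ExLe P (x.push (prod.fst : A ⨯ B ⟶ A)) y ↔
      ExLe P x (P.reind (prod.fst : A ⨯ B ⟶ A) y) :=
  ExEl.exLe_push_iff_exLe_reind prod.fst x y
end

section
/- The full existential completion satisfies Frobenius reciprocity along product projections: for a lex primary doctrine P on a finite-limit category C, a projection π : A×B → A, and elements x ∈ P^∃(A×B), y ∈ P^∃(A), one has ∃_π(x ∧ P^∃_π(y)) = ∃_π(x) ∧ y in P^∃(A). -/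
open CategoryTheory CategoryTheory.Limits

universe w v u

variable {C : Type u} [Category.{v} C]

/-! Frobenius reciprocity holds along every arrow `u`, not only product projections: the domain
of `∃_u(x ∧ P^∃_u y)` is `X ×_{A'} (A' ×_A Y)` and that of `∃_u x ∧ y` is `X ×_A Y`, and the
pasting iso between them carries one pair of restricted predicates exactly onto the other. -/

namespace ExEl

variable [HasPullbacks C] {P : Doctrine.{w} C} {A A' : C}

theorem push_meet_reind_le_meet_push (u : A' ⟶ A) (x : ExEl P A') (y : ExEl P A) :
    ExLe P ((x.meet (P.reind u y)).push u) ((x.push u).meet y) := by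
  refine ⟨(pullbackRightPullbackFstIso u y.arr x.arr).hom, ?_, le_of_eq ?_⟩
  · simp [push, meet, Doctrine.reind]
  · simp only [push, meet, Doctrine.reind, P.map_inf, ← P.map_comp,
      pullbackRightPullbackFstIso_hom_fst, pullbackRightPullbackFstIso_hom_snd]

theorem meet_push_le_push_meet_reind (u : A' ⟶ A) (x : ExEl P A') (y : ExEl P A) :
    ExLe P ((x.push u).meet y) ((x.meet (P.reind u y)).push u) := by
  refine ⟨(pullbackRightPullbackFstIso u y.arr x.arr).inv, ?_, le_of_eq ?_⟩
  · simp [push, meet, Doctrine.reind]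
  · simp only [push, meet, Doctrine.reind, P.map_inf, ← P.map_comp,
      pullbackRightPullbackFstIso_inv_fst, pullbackRightPullbackFstIso_inv_snd_snd]

end ExEl

/-- Frobenius reciprocity for the full existential completion along a
product projection `π : A ⨯ B ⟶ A`:  `∃_π(x ⊓ P^∃_π(y)) = ∃_π(x) ⊓ y` in `P^∃(A)`
(equality in the poset reflection, i.e. mutual inequality in the preorder). -/
theorem fullExCompletion_frobenius [HasFiniteLimits C]
    (P : Doctrine.{w} C) (A B : C) (x : ExEl P (A ⨯ B)) (y : ExEl P A) :
    ExLe P ((x.meet (P.reind (prod.fst : A ⨯ B ⟶ A) y)).push (prod.fst : A ⨯ B ⟶ A))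
      ((x.push (prod.fst : A ⨯ B ⟶ A)).meet y) ∧
    ExLe P ((x.push (prod.fst : A ⨯ B ⟶ A)).meet y)
      ((x.meet (P.reind (prod.fst : A ⨯ B ⟶ A) y)).push (prod.fst : A ⨯ B ⟶ A)) :=
  ⟨x.push_meet_reind_le_meet_push _ y, x.meet_push_le_push_meet_reind _ y⟩
end

section
/- The full existential completion of any lex primary doctrine satisfies the Rule of Choice: if P : C^op → InfSl is a lex primary doctrine and P^∃ its full existential completion, then for every α ∈ P^∃(A × B), if ⊤_A ≤ ∃_{π_A}(α) in P^∃(A), then there exists an arrow f : A → B in C such that ⊤_A ≤ P^∃_{⟨id_A, f⟩}(α). -/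
/-!
A witness of `⊤_A ≤ ∃_{π_A}(α)` is an arrow `k : A ⟶ α.dom` splitting `α.arr ≫ π_A` along which
the predicate of `α` is true. With `f := k ≫ α.arr ≫ π_B` we get `⟨𝟙_A, f⟩ = k ≫ α.arr`, so `k`
factors `⟨𝟙_A, f⟩` through `α.arr`, which is exactly a witness of `⊤_A ≤ P^∃_{⟨𝟙_A, f⟩}(α)`.
-/

open CategoryTheory CategoryTheory.Limits

universe w v u

variable {C : Type u} [Category.{v} C]

theorem exLe_top_iff {P : Doctrine.{w} C} {A : C} (x : ExEl P A) :
    ExLe P (ExEl.top P A) x ↔ ∃ k : A ⟶ x.dom, k ≫ x.arr = 𝟙 A ∧ ⊤ ≤ P.map k x.pred :=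
  exists_congr fun _ => and_congr_left' eq_comm

theorem exLe_top_reind_of_factor [HasPullbacks C] {P : Doctrine.{w} C} {A A' : C}
    (u : A' ⟶ A) (y : ExEl P A) (k : A' ⟶ y.dom) (hu : u = k ≫ y.arr)
    (hk : ⊤ ≤ P.map k y.pred) :
    ExLe P (ExEl.top P A') (P.reind u y) := by
  have hsq : 𝟙 A' ≫ u = k ≫ y.arr := by rw [Category.id_comp, hu]
  refine (exLe_top_iff _).2 ⟨pullback.lift (𝟙 A') k hsq, pullback.lift_fst _ _ _, ?_⟩
  dsimp only [Doctrine.reind]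
  rwa [← P.map_comp, pullback.lift_snd]

theorem prod.lift_id_comp_snd_of_comp_fst {A B : C} [HasBinaryProduct A B] (g : A ⟶ A ⨯ B)
    (hg : g ≫ prod.fst = 𝟙 A) : prod.lift (𝟙 A) (g ≫ prod.snd) = g := by
  rw [← hg, ← prod.comp_lift, prod.lift_fst_snd, Category.comp_id]

/-- the full existential completion of any lex primary doctrine satisfies
the Rule of Choice: for `α ∈ P^∃(A ⨯ B)`, if `⊤_A ≤ ∃_{π_A}(α)` in `P^∃(A)` then there
is an arrow `f : A ⟶ B` of `C` with `⊤_A ≤ P^∃_{⟨𝟙_A, f⟩}(α)`. -/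
theorem fullExCompletion_ruleOfChoice [HasFiniteLimits C]
    (P : Doctrine.{w} C) (A B : C) (α : ExEl P (A ⨯ B))
    (h : ExLe P (ExEl.top P A) (α.push (prod.fst : A ⨯ B ⟶ A))) :
    ∃ f : A ⟶ B, ExLe P (ExEl.top P A) (P.reind (prod.lift (𝟙 A) f) α) := by
  obtain ⟨k, hsection, hk⟩ :
      ∃ k : A ⟶ α.dom, k ≫ α.arr ≫ prod.fst = 𝟙 A ∧ ⊤ ≤ P.map k α.pred :=
    (exLe_top_iff _).1 h
  refine ⟨(k ≫ α.arr) ≫ prod.snd, exLe_top_reind_of_factor _ α k ?_ hk⟩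
  exact prod.lift_id_comp_snd_of_comp_fst (k ≫ α.arr) (by rw [Category.assoc, hsection])
end

section
/- Let P : C^op → InfSl be a first-order hyperdoctrine (fibres are Heyting algebras, reindexings are Heyting morphisms, with left and right adjoints ∃_f ⊣ P_f ⊣ ∀_f along all arrows satisfying Beck–Chevalley) that satisfies the Comprehension Axiom (for every X there exist P(X) and ∈_X ∈ P(X × P(X)) such that for all Y and α ∈ P(X×Y) the sentence ∀i:Y ∃s:P(X) ∀x:X (∈_X(x,s) ↔ α(x,i)) holds) and the Rule of Choice (⊤_A ≤ ∃_{π_A}(α) implies existence of f : A → B with ⊤_A ≤ P_{⟨id,f⟩}(α)). Then P has weak power objects: for every α ∈ P(X × Y) there exists an arrow {α} : Y → P(X) such that P_{id_X × {α}}(∈_X) = α; hence P is a tripos. -/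
open CategoryTheory CategoryTheory.Limits

universe w v u

/-- A (full) first-order hyperdoctrine: fibres are Heyting algebras, reindexing maps
are Heyting algebra morphisms, and reindexing along every arrow has both a left
adjoint `ex` and a right adjoint `all`, satisfying Beck–Chevalley. -/
structure FOHyp (C : Type u) [Category.{v} C] where
  P : C → Type w
  [instHA : ∀ A, HeytingAlgebra (P A)]
  map : ∀ {A B : C}, (A ⟶ B) → P B → P A
  map_id : ∀ (A : C) (x : P A), map (𝟙 A) x = x
  map_comp : ∀ {A B D : C} (f : A ⟶ B) (g : B ⟶ D) (x : P D),
      map (f ≫ g) x = map f (map g x)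
  map_mono : ∀ {A B : C} (f : A ⟶ B), Monotone (map f)
  map_top : ∀ {A B : C} (f : A ⟶ B), map f (⊤ : P B) = ⊤
  map_bot : ∀ {A B : C} (f : A ⟶ B), map f (⊥ : P B) = ⊥
  map_inf : ∀ {A B : C} (f : A ⟶ B) (x y : P B), map f (x ⊓ y) = map f x ⊓ map f y
  map_sup : ∀ {A B : C} (f : A ⟶ B) (x y : P B), map f (x ⊔ y) = map f x ⊔ map f y
  map_himp : ∀ {A B : C} (f : A ⟶ B) (x y : P B), map f (x ⇨ y) = map f x ⇨ map f y
  ex : ∀ {A B : C}, (A ⟶ B) → P A → P B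
  all : ∀ {A B : C}, (A ⟶ B) → P A → P B
  ex_adj : ∀ {A B : C} (f : A ⟶ B) (a : P A) (b : P B), ex f a ≤ b ↔ a ≤ map f b
  all_adj : ∀ {A B : C} (f : A ⟶ B) (a : P A) (b : P B), map f b ≤ a ↔ b ≤ all f a
  bc_ex : ∀ {W X Y Z : C} (p : W ⟶ X) (q : W ⟶ Y) (f : X ⟶ Z) (g : Y ⟶ Z),
    IsPullback p q f g → ∀ a : P Y, map f (ex g a) = ex p (map q a)
  bc_all : ∀ {W X Y Z : C} (p : W ⟶ X) (q : W ⟶ Y) (f : X ⟶ Z) (g : Y ⟶ Z),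
    IsPullback p q f g → ∀ a : P Y, map f (all g a) = all p (map q a)

attribute [instance] FOHyp.instHA

variable {C : Type u} [Category.{v} C] [HasBinaryProducts C]

/-- Internal bi-implication in a fibre. -/
def FOHyp.biimp (H : FOHyp.{w} C) {A : C} (a b : H.P A) : H.P A := (a ⇨ b) ⊓ (b ⇨ a)

/-- The Comprehension Axiom: for every `X` there are `PX` and `∈_X ∈ P(X ⨯ PX)` such
that for all `Y` and `α ∈ P(X ⨯ Y)` the sentence
`∀ i:Y. ∃ s:PX. ∀ x:X. (∈_X(x,s) ↔ α(x,i))` holds in the internal language. -/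
def SatisfiesCA (H : FOHyp.{w} C) : Prop :=
  ∀ X : C, ∃ (PX : C) (mem : H.P (X ⨯ PX)), ∀ (Y : C) (α : H.P (X ⨯ Y)),
    (⊤ : H.P Y) ≤ H.ex (prod.snd : PX ⨯ Y ⟶ Y)
      (H.all (prod.snd : X ⨯ (PX ⨯ Y) ⟶ PX ⨯ Y)
        (H.biimp (H.map (prod.map (𝟙 X) (prod.fst : PX ⨯ Y ⟶ PX)) mem)
          (H.map (prod.map (𝟙 X) (prod.snd : PX ⨯ Y ⟶ Y)) α)))

/-- The Rule of Choice: if `⊤_A ≤ ∃_{π_A}(α)` then some `f : A ⟶ B` satisfies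
`⊤_A ≤ P_{⟨𝟙,f⟩}(α)`. -/
def SatisfiesRC (H : FOHyp.{w} C) : Prop :=
  ∀ {A B : C} (α : H.P (A ⨯ B)), (⊤ : H.P A) ≤ H.ex (prod.fst : A ⨯ B ⟶ A) α →
    ∃ f : A ⟶ B, (⊤ : H.P A) ≤ H.map (prod.lift (𝟙 A) f) α

/-! Comprehension says that internally every `α(-, i)` is `∈_X(-, s)` for some
`s`; the Rule of Choice turns the internal `∃ s` into an arrow `f : Y ⟶ PX`, and
substituting `f` into the internal `∀ x. ∈_X(x, s) ↔ α(x, i)` (Beck–Chevalley) makes the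
bi-implication valid, i.e. `P_{𝟙 × f}(∈_X) = α`. -/

section

variable {D : Type*} [Category D] (H : FOHyp D)

namespace FOHyp

lemma le_map_ex {A B : D} (f : A ⟶ B) (a : H.P A) : a ≤ H.map f (H.ex f a) :=
  (H.ex_adj f a _).mp le_rfl

lemma ex_comp {A B E : D} (f : A ⟶ B) (g : B ⟶ E) (a : H.P A) :
    H.ex (f ≫ g) a = H.ex g (H.ex f a) := by
  apply le_antisymm
  · rw [H.ex_adj, H.map_comp]
    exact (H.le_map_ex f a).trans (H.map_mono f (H.le_map_ex g _))
  · rw [H.ex_adj, H.ex_adj, ← H.map_comp]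
    exact H.le_map_ex (f ≫ g) a

lemma ex_hom_eq_map_inv {A B : D} (e : A ≅ B) (a : H.P A) : H.ex e.hom a = H.map e.inv a := by
  apply le_antisymm
  · rw [H.ex_adj, ← H.map_comp, e.hom_inv_id, H.map_id]
  · calc H.map e.inv a ≤ H.map e.inv (H.map e.hom (H.ex e.hom a)) :=
          H.map_mono _ (H.le_map_ex _ a)
      _ = H.ex e.hom a := by rw [← H.map_comp, e.inv_hom_id, H.map_id]

lemma top_le_all_iff {A B : D} (f : A ⟶ B) (a : H.P A) : ⊤ ≤ H.all f a ↔ ⊤ ≤ a := by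
  rw [← H.all_adj, H.map_top]

lemma map_biimp {A B : D} (f : A ⟶ B) (a b : H.P B) :
    H.map f (H.biimp a b) = H.biimp (H.map f a) (H.map f b) := by
  rw [biimp, biimp, H.map_inf, H.map_himp, H.map_himp]

lemma top_le_biimp_iff {A : D} (a b : H.P A) : ⊤ ≤ H.biimp a b ↔ a = b := by
  rw [biimp, le_inf_iff, top_le_iff, top_le_iff, himp_eq_top_iff, himp_eq_top_iff,
    le_antisymm_iff]

end FOHyp

end

lemma isPullback_prod_snd_map {X A B : C} (h : A ⟶ B) :
    IsPullback (prod.snd : X ⨯ A ⟶ A) (prod.map (𝟙 X) h) h prod.snd := by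
  refine IsPullback.of_isLimit' ⟨by simp⟩ <|
    PullbackCone.IsLimit.mk _ (fun s => prod.lift (s.snd ≫ prod.fst) s.fst)
      (fun s => by simp [prod.lift_snd]) (fun s => ?_) (fun s m h₁ h₂ => ?_)
  · ext
    · simp [prod.lift_fst]
    · simpa [prod.lift_snd] using s.condition
  · ext
    · simpa [prod.lift_fst] using h₂ =≫ prod.fst
    · simpa [prod.lift_snd] using h₁

lemma FOHyp.map_all_snd (H : FOHyp.{w} C) {X A B : C} (h : A ⟶ B) (φ : H.P (X ⨯ B)) :
    H.map h (H.all prod.snd φ) = H.all prod.snd (H.map (prod.map (𝟙 X) h) φ) :=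
  H.bc_all _ _ _ _ (isPullback_prod_snd_map h) φ

lemma SatisfiesRC.exists_top_le_map_of_top_le_ex_snd {H : FOHyp.{w} C} (hRC : SatisfiesRC H)
    {A B : C} (β : H.P (B ⨯ A)) (hβ : ⊤ ≤ H.ex prod.snd β) :
    ∃ f : A ⟶ B, ⊤ ≤ H.map (prod.lift f (𝟙 A)) β := by
  let σ := prod.braiding A B
  have hswap : H.ex prod.fst (H.map σ.hom β) = H.ex prod.snd β := by
    have hfst : (prod.fst : A ⨯ B ⟶ A) = σ.hom ≫ prod.snd := by simp [σ, prod.lift_snd]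
    rw [hfst, H.ex_comp, H.ex_hom_eq_map_inv, ← H.map_comp, σ.inv_hom_id, H.map_id]
  obtain ⟨f, hf⟩ := hRC _ (hswap ▸ hβ)
  have hlift : prod.lift (𝟙 A) f ≫ σ.hom = prod.lift f (𝟙 A) := by
    ext <;> simp [σ, prod.lift_fst, prod.lift_snd]
  exact ⟨f, by rwa [← H.map_comp, hlift] at hf⟩

/-- a first-order hyperdoctrine satisfying the Comprehension Axiom and the
Rule of Choice has weak power objects (hence is a tripos): for every `X` there are `PX`
and `∈_X ∈ P(X ⨯ PX)` such that every `α ∈ P(X ⨯ Y)` is `P_{𝟙 × {α}}(∈_X)` for some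
arrow `{α} : Y ⟶ PX`. -/
theorem ca_rc_implies_weakPowerObjects (H : FOHyp.{w} C)
    (hCA : SatisfiesCA H) (hRC : SatisfiesRC H) :
    ∀ X : C, ∃ (PX : C) (mem : H.P (X ⨯ PX)), ∀ (Y : C) (α : H.P (X ⨯ Y)),
      ∃ g : Y ⟶ PX, H.map (prod.map (𝟙 X) g) mem = α := by
  intro X
  obtain ⟨PX, mem, hmem⟩ := hCA X
  refine ⟨PX, mem, fun Y α => ?_⟩
  obtain ⟨f, hf⟩ := hRC.exists_top_le_map_of_top_le_ex_snd _ (hmem Y α)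
  refine ⟨f, ?_⟩
  rwa [H.map_all_snd, H.top_le_all_iff, H.map_biimp, ← H.map_comp, ← H.map_comp,
    prod.map_map, prod.map_map, prod.lift_fst, prod.lift_snd, Category.comp_id,
    prod.map_id_id, H.map_id, H.top_le_biimp_iff] at hf
end

section
/- If a lex primary doctrine P on a finite-limit category C has a weak predicate classifier (Ω, ∈) and C is weakly cartesian closed, then P has weak power objects: setting PA := Ω^A and ∈_A := P_{ev}(∈) where ev : A × Ω^A → Ω is the weak evaluation arrow, for every β ∈ P(A × Y) there exists an arrow g : Y → Ω^A with β = P_{id_A × g}(∈_A). -/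
open CategoryTheory CategoryTheory.Limits

universe w v u

variable {C : Type u} [Category.{v} C]

/-- if a lex primary doctrine `P` has a weak predicate classifier `(Ω, ∈)`
and `C` is weakly cartesian closed, then `P` has weak power objects: given a weak
exponential `(E, ev : A ⨯ E ⟶ Ω)` of `Ω` by `A`, setting `PA := E` and
`∈_A := P_{ev}(∈)`, every `β ∈ P(A ⨯ Y)` equals `P_{𝟙_A × g}(∈_A)` for some
`g : Y ⟶ E`. -/
theorem weakClassifier_weaklyCartesianClosed_weakPowerObjects
    [HasBinaryProducts C] (P : Doctrine.{w} C) (Ω : C) (mem : P.P Ω)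
    (hclass : ∀ (A : C) (α : P.P A), ∃ c : A ⟶ Ω, P.map c mem = α)
    (A E : C) (ev : A ⨯ E ⟶ Ω)
    (hexp : ∀ (Y : C) (f : A ⨯ Y ⟶ Ω), ∃ g : Y ⟶ E, f = prod.map (𝟙 A) g ≫ ev) :
    ∀ (Y : C) (β : P.P (A ⨯ Y)), ∃ g : Y ⟶ E,
      β = P.map (prod.map (𝟙 A) g) (P.map ev mem) := by
  intro Y β
  obtain ⟨c, hc⟩ := hclass (A ⨯ Y) β
  obtain ⟨g, hg⟩ := hexp Y c
  exact ⟨g, by rw [← hc, hg, P.map_comp]⟩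
end

section
/- Let C be a category with finite limits and a generic proof θ : Θ → Λ. Then for every object X, the slice category C/X has a generic proof, given by the morphism id_X × θ : X × Θ → X × Λ over X (with structure maps the projections to X): for every morphism into an object of C/X there is a classifying map making the required pullback factor mutually through the given map. -/
open CategoryTheory CategoryTheory.Limits

universe v u

/-- A generic proof in a category: `θ : Θ ⟶ Λ` such that every arrow `f : Y ⟶ X` is
classified by some `υ : X ⟶ Λ`, meaning that `f` and the pullback of `θ` along `υ`
factor through each other over `X`. -/
def IsGenericProof {C : Type u} [Category.{v} C] {Θ Λ : C} (θ : Θ ⟶ Λ) : Prop :=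
  ∀ {Y X : C} (f : Y ⟶ X), ∃ (υ : X ⟶ Λ) (W : C) (p : W ⟶ X) (q : W ⟶ Θ),
    IsPullback p q υ θ ∧ ∃ (e₁ : Y ⟶ W) (e₂ : W ⟶ Y), e₁ ≫ p = f ∧ e₂ ≫ f = p

variable {C : Type u} [Category.{v} C]

/-! A morphism `f : Y ⟶ Z` of `Over X` is classified by `⟨Z.hom, υ⟩`, where `υ` classifies
`f.left` in `C`. The pullback of `𝟙_X × θ` along it is the pullback of `θ` along `υ`, because
the square formed by `𝟙_X × θ`, `θ` and the two second projections is itself a pullback; the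
mutual factorizations of `f.left` through it then automatically lie over `X`. -/

namespace CategoryTheory.IsPullback

lemma of_prod_snd_with_id {A B : C} (f : A ⟶ B) (X : C) [HasBinaryProduct X A]
    [HasBinaryProduct X B] :
    IsPullback prod.snd (prod.map (𝟙 X) f) f prod.snd := by
  refine of_isLimit' ⟨by simp⟩ (PullbackCone.IsLimit.mk _
    (fun s ↦ prod.lift (s.snd ≫ prod.fst) s.fst) (fun s ↦ prod.lift_snd _ _) (fun s ↦ ?_) ?_)
  · ext
    · simp [prod.lift_fst]
    · simp [prod.lift_snd, s.condition]
  · intro s m h₁ h₂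
    ext
    · simp [prod.lift_fst, ← h₂]
    · simpa [prod.lift_snd] using h₁

lemma prod_lift_prod_map_id {X Z W Θ Λ : C} [HasBinaryProduct X Θ] [HasBinaryProduct X Λ]
    {θ : Θ ⟶ Λ} {υ : Z ⟶ Λ} {p : W ⟶ Z} {q : W ⟶ Θ} (h : Z ⟶ X)
    (hpb : IsPullback p q υ θ) :
    IsPullback p (prod.lift (p ≫ h) q) (prod.lift h υ) (prod.map (𝟙 X) θ) := by
  refine (paste_vert_iff (of_prod_snd_with_id θ X).flip ?_).mp ?_
  · ext <;> simp [hpb.w]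
  · simpa only [prod.lift_snd] using hpb

end CategoryTheory.IsPullback

/-- if a finite-limit category `C` has a generic proof `θ : Θ ⟶ Λ`, then
for every object `X` the slice `C/X` has a generic proof, given by
`𝟙_X × θ : X ⨯ Θ ⟶ X ⨯ Λ` over `X` (with the projections to `X` as structure maps). -/
theorem slice_genericProof [HasFiniteLimits C] {Θ Λ : C} (θ : Θ ⟶ Λ)
    (hθ : IsGenericProof θ) (X : C) :
    IsGenericProof
      ((Over.homMk (prod.map (𝟙 X) θ) (by simp)) :
        Over.mk (prod.fst : X ⨯ Θ ⟶ X) ⟶ Over.mk (prod.fst : X ⨯ Λ ⟶ X)) := by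
  intro Y Z f
  obtain ⟨υ, W, p, q, hpb, e₁, e₂, he₁, he₂⟩ := hθ f.left
  have he₂_over : e₂ ≫ Y.hom = p ≫ Z.hom := by rw [← Over.w f, reassoc_of% he₂]
  refine ⟨Over.homMk (prod.lift Z.hom υ) (prod.lift_fst _ _), Over.mk (p ≫ Z.hom),
    Over.homMk p, Over.homMk (prod.lift (p ≫ Z.hom) q) (prod.lift_fst _ _), ?_,
    Over.homMk e₁ (by simp [reassoc_of% he₁]), Over.homMk e₂ (by simpa using he₂_over), ?_, ?_⟩
  · apply IsPullback.of_map_of_faithful (Over.forget X)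
    simpa using hpb.prod_lift_prod_map_id Z.hom
  · ext; simpa using he₁
  · ext; simpa using he₂
end

section
/- Let C be a category with finite limits and weak dependent products. Then every slice category C/X has weak dependent products. -/
open CategoryTheory CategoryTheory.Limits

universe v u

/-- `(e, p, q, h)` exhibits `h : Z ⟶ I` (with `E` the pullback of `h` along `g` and
`e : E ⟶ X` over `J`) as a weak dependent product of `f : X ⟶ J` along `g : J ⟶ I`:
the diagram is weakly terminal among all such diagrams. -/
def IsWeakDepProd {C : Type u} [Category.{v} C] {X J I E Z : C}
    (f : X ⟶ J) (g : J ⟶ I) (e : E ⟶ X) (p : E ⟶ J) (q : E ⟶ Z) (h : Z ⟶ I) : Prop :=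
  IsPullback p q g h ∧ e ≫ f = p ∧
  ∀ {E' Z' : C} (e' : E' ⟶ X) (p' : E' ⟶ J) (q' : E' ⟶ Z') (h' : Z' ⟶ I),
    IsPullback p' q' g h' → e' ≫ f = p' →
    ∃ (w : Z' ⟶ Z) (k : E' ⟶ E), e' = k ≫ e ∧ h' = w ≫ h

/-- A category has weak dependent products when every `f` along every `g` admits one. -/
def HasWeakDepProds (C : Type u) [Category.{v} C] : Prop :=
  ∀ {X J I : C} (f : X ⟶ J) (g : J ⟶ I),
    ∃ (E Z : C) (e : E ⟶ X) (p : E ⟶ J) (q : E ⟶ Z) (h : Z ⟶ I),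
      IsWeakDepProd f g e p q h

/-- if a category with finite limits has weak dependent products, then
every slice category has weak dependent products. -/
theorem slice_hasWeakDepProds {C : Type u} [Category.{v} C] [HasFiniteLimits C]
    (hC : HasWeakDepProds C) (X : C) : HasWeakDepProds (Over X) := by
  intro A J I f g
  obtain ⟨E, Z, e, p, q, h, hpb, hef, huniv⟩ := hC f.left g.left
  refine ⟨Over.mk (p ≫ J.hom), Over.mk (h ≫ I.hom),
    Over.homMk e (by
      have := Over.w f
      simp only [Over.mk_hom]
      rw [← this, ← Category.assoc, hef]),
    Over.homMk p rfl,
    Over.homMk q (by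
      simp only [Over.mk_hom]
      rw [← Category.assoc, ← hpb.w, Category.assoc, Over.w g]),
    Over.homMk h rfl, ?_, ?_, ?_⟩
  · apply IsPullback.of_map (Over.forget X)
    · ext
      simpa using hpb.w
    · simpa using hpb
  · ext
    simpa using hef
  · intro E' Z' e' p' q' h' hpb' he'
    have hpb'c : IsPullback p'.left q'.left g.left h'.left := by
      simpa using hpb'.map (Over.forget X)
    have he'c : e'.left ≫ f.left = p'.left := by
      have := congrArg CommaMorphism.left he'
      simpa using this
    obtain ⟨w, k, hk, hw⟩ := huniv e'.left p'.left q'.left h'.left hpb'c he'c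
    refine ⟨Over.homMk w (by
        simp only [Over.mk_hom]
        rw [← Category.assoc, ← hw, Over.w h']),
      Over.homMk k (by
        simp only [Over.mk_hom]
        have hA : e'.left ≫ A.hom = E'.hom := Over.w e'
        have hJ : f.left ≫ J.hom = A.hom := Over.w f
        calc k ≫ p ≫ J.hom = k ≫ (e ≫ f.left) ≫ J.hom := by rw [hef]
          _ = (k ≫ e) ≫ f.left ≫ J.hom := by simp
          _ = e'.left ≫ A.hom := by rw [← hk, hJ]
          _ = E'.hom := hA), ?_, ?_⟩
    · ext
      simpa using hk
    · ext
      simpa using hw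
end

section
/- Let C be a category with finite limits and weak dependent products. Then the weak subobject doctrine Ψ_C (sending A to the poset reflection of C/A) has right adjoints to reindexing along all arrows: for g : J → I, the map Ψ_g : Ψ_C(I) → Ψ_C(J) given by pullback has a right adjoint ∀_g sending the class of f : X → J to the class of the weak dependent product h : Z → I of f along g; i.e., Ψ_g([h']) ≤ [f] iff [h'] ≤ ∀_g([f]). -/
open CategoryTheory CategoryTheory.Limits

universe v u

/-- The order of the weak subobject doctrine `Ψ_C(A)` (before poset reflection):
`[f] ≤ [f']` iff `f` factors through `f'`. -/
def WLe {C : Type u} [Category.{v} C] {A X X' : C} (f : X ⟶ A) (f' : X' ⟶ A) : Prop :=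
  ∃ k : X ⟶ X', f = k ≫ f'

/-- in a finite-limit category with weak dependent products, the weak
subobject doctrine has right adjoints to reindexing along every arrow `g : J ⟶ I`:
if `h : Z ⟶ I` is the weak dependent product of `f : X ⟶ J` along `g`, then for every
`m : W ⟶ I` one has `Ψ_g([m]) ≤ [f]` iff `[m] ≤ [h]` (where `Ψ_g([m])` is the pullback
projection `pullback g m ⟶ J`). -/
theorem weakSubobjects_forall_adjoint {C : Type u} [Category.{v} C] [HasFiniteLimits C]
    {X J I E Z : C} (f : X ⟶ J) (g : J ⟶ I)
    (e : E ⟶ X) (p : E ⟶ J) (q : E ⟶ Z) (h : Z ⟶ I)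
    (hw : IsWeakDepProd f g e p q h) {W : C} (m : W ⟶ I) :
    WLe (pullback.fst g m) f ↔ WLe m h := by
  obtain ⟨hpb, hef, huniv⟩ := hw
  constructor
  · rintro ⟨k, hk⟩
    obtain ⟨w, _, _, hw⟩ := huniv k (pullback.fst g m) (pullback.snd g m) m
      (IsPullback.of_hasPullback g m) hk.symm
    exact ⟨w, hw⟩
  · rintro ⟨w, hwm⟩
    have hcomm : pullback.fst g m ≫ g = (pullback.snd g m ≫ w) ≫ h := by
      rw [pullback.condition, hwm, Category.assoc]
    refine ⟨hpb.lift (pullback.fst g m) (pullback.snd g m ≫ w) hcomm ≫ e, ?_⟩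
    rw [Category.assoc, hef]
    exact (hpb.lift_fst _ _ _).symm
end

section
/- Let P : C^op → InfSl be a lex primary doctrine and let I : C → G_P be the functor A ↦ (A, ⊤_A). Then the full existential completion P^∃ is naturally isomorphic to the composite Ψ_{G_P} ∘ I^op: for each object A of C, the poset P^∃(A) is isomorphic to the poset reflection of the slice category G_P/(A,⊤), naturally in A. -/
open CategoryTheory CategoryTheory.Limits

universe w v u

variable {C : Type u} [Category.{v} C]

/-- An object of the slice category `G_P / (A, ⊤)`. -/
def SliceObj (P : Doctrine.{w} C) (A : C) : Type _ :=
  Σ X : Pt P, X ⟶ (⟨A, (⊤ : P.P A)⟩ : Pt P)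

/-- The order of the weak subobject doctrine `Ψ_{G_P}` at `(A, ⊤)` (before poset
reflection): factorization in the slice. -/
def SliceLe {P : Doctrine.{w} C} {A : C} (s t : SliceObj P A) : Prop :=
  ∃ k : s.1 ⟶ t.1, k ≫ t.2 = s.2

/-- Reindexing of `Ψ_{G_P}` along `I(u) : (A', ⊤) ⟶ (A, ⊤)`, computed by pullback in
`G_P` (base pullback with the pulled-back predicate). -/
noncomputable def sliceReind (P : Doctrine.{w} C) [HasPullbacks C] {A' A : C}
    (u : A' ⟶ A) (s : SliceObj P A) : SliceObj P A' :=
  ⟨⟨pullback u s.2.hom, P.map (pullback.snd u s.2.hom) s.1.pred⟩,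
    ⟨pullback.fst u s.2.hom, by rw [P.map_top]; exact le_top⟩⟩

/-! Every arrow `f : B ⟶ A` is a morphism `(B, β) ⟶ (A, ⊤)` of points, since `β ≤ ⊤ = P_f(⊤)`.
So an object of `G_P/(A, ⊤)` is literally a pair `(f, β)`, a slice morphism is literally a
witness `h` of `(f, α) ≤ (g, β)`, and both reindexings are the same base pullback carrying the
same pulled-back predicate. -/

section

variable {P : Doctrine.{w} C}

def PtHom.toTop (X : Pt P) {A : C} (f : X.base ⟶ A) : X ⟶ (⟨A, (⊤ : P.P A)⟩ : Pt P) :=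
  ⟨f, by rw [P.map_top]; exact le_top⟩

variable (P) in
def exElEquivSliceObj (A : C) : ExEl P A ≃ SliceObj P A where
  toFun x := ⟨⟨x.dom, x.pred⟩, PtHom.toTop _ x.arr⟩
  invFun s := ⟨s.1.base, s.2.hom, s.1.pred⟩
  left_inv _ := rfl
  right_inv _ := rfl

theorem SliceLe.refl {A : C} (s : SliceObj P A) : SliceLe s s :=
  ⟨𝟙 _, Category.id_comp _⟩

theorem exLe_iff_sliceLe {A : C} (x y : ExEl P A) :
    ExLe P x y ↔ SliceLe (exElEquivSliceObj P A x) (exElEquivSliceObj P A y) := by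
  constructor
  · rintro ⟨h, harr, hpred⟩
    exact ⟨⟨h, hpred⟩, PtHom.ext' harr.symm⟩
  · rintro ⟨k, hk⟩
    exact ⟨k.hom, (congrArg PtHom.hom hk).symm, k.cond⟩

theorem exElEquivSliceObj_reind [HasPullbacks C] {A' A : C} (u : A' ⟶ A) (x : ExEl P A) :
    exElEquivSliceObj P A' (P.reind u x) = sliceReind P u (exElEquivSliceObj P A x) :=
  rfl

end

/-- for a lex primary doctrine `P` and the functor `I : C → G_P`,
`A ↦ (A, ⊤)`, the full existential completion `P^∃` is naturally isomorphic to
`Ψ_{G_P} ∘ I^op`: for each `A` there is a bijection between `ExEl P A` (whose poset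
reflection is `P^∃(A)`) and the objects of `G_P/(A,⊤)` (whose poset reflection is
`Ψ_{G_P}(I A)`), which is an order isomorphism of the underlying preorders and is
natural in `A` with respect to reindexing. -/
theorem fullExCompletion_iso_weakSubobjects_of_points
    [HasFiniteLimits C] (P : Doctrine.{w} C) :
    ∃ e : ∀ A : C, ExEl P A ≃ SliceObj P A,
      (∀ (A : C) (x y : ExEl P A), ExLe P x y ↔ SliceLe (e A x) (e A y)) ∧
      (∀ {A' A : C} (u : A' ⟶ A) (x : ExEl P A),
        SliceLe (e A' (P.reind u x)) (sliceReind P u (e A x)) ∧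
        SliceLe (sliceReind P u (e A x)) (e A' (P.reind u x))) := by
  refine ⟨exElEquivSliceObj P, fun A => exLe_iff_sliceLe, fun u x => ?_⟩
  rw [exElEquivSliceObj_reind]
  exact ⟨SliceLe.refl _, SliceLe.refl _⟩
end
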